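/- arXiv:1104.3964 — 3 statements merged into one kernel-verified Lean document; each statement's English description precedes it below -/
import Mathlib

section
/- The series ∑_{x=1}^∞ [ (1/x² + 2·ln x / x) − ln(x·(x+1))·ln((x+1)/x) ] converges (its sum is denoted γ₂ ≈ 1.49930237…). -/
/-!
Put `a = log x` and `L = log (x + 1) - log x`. Since `log (x (x + 1)) · log ((x + 1) / x)` is
`log (x + 1)² - a²`, the summand at `x` equals `(1/x - L)(1/x + L) + 2a (1/x - L)`.
From `1/(x + 1) ≤ L ≤ 1/x` we get `0 ≤ 1/x - L ≤ 1/x²`, and `a ≤ 2 √x`, so the summand lies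
between `0` and `6 x^(-3/2)`, whose series converges.
-/

open Real

noncomputable def gammaTwoTerm (x : ℝ) : ℝ :=
  (1 / x ^ 2 + 2 * log x / x) - log (x * (x + 1)) * log ((x + 1) / x)

lemma log_add_one_sub_log_le_inv {x : ℝ} (hx : 0 < x) : log (x + 1) - log x ≤ x⁻¹ := by
  have h := log_le_sub_one_of_pos (show 0 < (x + 1) / x by positivity)
  rw [log_div (by positivity) hx.ne'] at h
  linarith [show (x + 1) / x - 1 = x⁻¹ by field_simp; ring]

lemma inv_add_one_le_log_add_one_sub_log {x : ℝ} (hx : 0 < x) :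
    (x + 1)⁻¹ ≤ log (x + 1) - log x := by
  have h := one_sub_inv_le_log_of_pos (show 0 < (x + 1) / x by positivity)
  rw [log_div (by positivity) hx.ne', inv_div] at h
  linarith [show 1 - x / (x + 1) = (x + 1)⁻¹ by field_simp; ring]

lemma log_mul_mul_log_div {x y : ℝ} (hx : 0 < x) (hy : 0 < y) :
    log (x * y) * log (y / x) = log y ^ 2 - log x ^ 2 := by
  rw [log_mul hx.ne' hy.ne', log_div hy.ne' hx.ne']
  ring

lemma gammaTwoTerm_eq {x : ℝ} (hx : 0 < x) :
    gammaTwoTerm x = (x⁻¹ - (log (x + 1) - log x)) * (x⁻¹ + (log (x + 1) - log x)) +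
      2 * log x * (x⁻¹ - (log (x + 1) - log x)) := by
  rw [gammaTwoTerm, log_mul_mul_log_div hx (by positivity)]
  field_simp
  ring

lemma inv_sub_log_add_one_sub_log_le {x : ℝ} (hx : 0 < x) :
    x⁻¹ - (log (x + 1) - log x) ≤ x⁻¹ ^ 2 := by
  have h : x⁻¹ - (x + 1)⁻¹ ≤ x⁻¹ ^ 2 := by
    rw [inv_sub_inv hx.ne' (by positivity : x + 1 ≠ 0), inv_pow, add_sub_cancel_left, ← one_div]
    exact one_div_le_one_div_of_le (by positivity) (by nlinarith)
  linarith [inv_add_one_le_log_add_one_sub_log hx]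

lemma gammaTwoTerm_nonneg {x : ℝ} (hx : 1 ≤ x) : 0 ≤ gammaTwoTerm x := by
  have hx0 : 0 < x := by linarith
  have hL : 0 ≤ log (x + 1) - log x := sub_nonneg.2 (log_le_log hx0 (by linarith))
  have hδ : 0 ≤ x⁻¹ - (log (x + 1) - log x) := by linarith [log_add_one_sub_log_le_inv hx0]
  have hsum : 0 ≤ x⁻¹ + (log (x + 1) - log x) := add_nonneg (inv_nonneg.2 hx0.le) hL
  rw [gammaTwoTerm_eq hx0]
  exact add_nonneg (mul_nonneg hδ hsum) (mul_nonneg (by linarith [log_nonneg hx]) hδ)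

lemma gammaTwoTerm_le {x : ℝ} (hx : 1 ≤ x) : gammaTwoTerm x ≤ 6 * x ^ (-(3 / 2) : ℝ) := by
  have hx0 : 0 < x := by linarith
  set δ := x⁻¹ - (log (x + 1) - log x)
  have hδ : 0 ≤ δ := by linarith [log_add_one_sub_log_le_inv hx0]
  have hδ' : δ ≤ x⁻¹ ^ 2 := inv_sub_log_add_one_sub_log_le hx0
  have hsum : x⁻¹ + (log (x + 1) - log x) ≤ 2 * x⁻¹ := by
    linarith [log_add_one_sub_log_le_inv hx0]
  have hlog : log x ≤ 2 * x ^ (1 / 2 : ℝ) := by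
    have := log_le_rpow_div hx0.le (by norm_num : (0 : ℝ) < 1 / 2)
    linarith
  have hcube : x⁻¹ ^ 3 ≤ x ^ (-(3 / 2) : ℝ) := by
    rw [← rpow_natCast, inv_rpow hx0.le, ← rpow_neg hx0.le]
    exact rpow_le_rpow_of_exponent_le hx (by norm_num)
  have hsqrt : x ^ (1 / 2 : ℝ) * x⁻¹ ^ 2 = x ^ (-(3 / 2) : ℝ) := by
    rw [← rpow_natCast, inv_rpow hx0.le, ← rpow_neg hx0.le, ← rpow_add hx0]
    norm_num
  calc gammaTwoTerm x = δ * (x⁻¹ + (log (x + 1) - log x)) + 2 * log x * δ := gammaTwoTerm_eq hx0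
    _ ≤ x⁻¹ ^ 2 * (2 * x⁻¹) + 2 * (2 * x ^ (1 / 2 : ℝ)) * x⁻¹ ^ 2 := by
      have : 0 ≤ log (x + 1) - log x := sub_nonneg.2 (log_le_log hx0 (by linarith))
      gcongr
    _ = 2 * x⁻¹ ^ 3 + 4 * (x ^ (1 / 2 : ℝ) * x⁻¹ ^ 2) := by ring
    _ ≤ 6 * x ^ (-(3 / 2) : ℝ) := by rw [hsqrt]; linarith

lemma summable_gammaTwoTerm_nat_add_one : Summable fun n : ℕ => gammaTwoTerm (n + 1) := by
  have hp : Summable fun n : ℕ => ((n + 1 : ℕ) : ℝ) ^ (-(3 / 2) : ℝ) :=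
    (summable_nat_add_iff 1).2 (summable_nat_rpow.2 (by norm_num))
  have one_le (n : ℕ) : (1 : ℝ) ≤ n + 1 := by simp
  refine .of_nonneg_of_le (fun n => gammaTwoTerm_nonneg (one_le n))
    (fun n => (gammaTwoTerm_le (one_le n)).trans_eq ?_) (hp.mul_left 6)
  push_cast
  rfl

/-- The series ∑_{x=1}^∞ [(1/x² + 2 ln x / x) − ln(x(x+1))·ln((x+1)/x)] converges;
its sum is γ₂. -/
theorem summable_gamma_two :
    Summable (fun x : ℕ =>
      (1 / ((x : ℝ) + 1) ^ 2 + 2 * Real.log ((x : ℝ) + 1) / ((x : ℝ) + 1)) -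
        Real.log (((x : ℝ) + 1) * ((x : ℝ) + 2)) *
          Real.log (((x : ℝ) + 2) / ((x : ℝ) + 1))) := by
  refine summable_gammaTwoTerm_nat_add_one.congr fun n => ?_
  rw [gammaTwoTerm, add_assoc, one_add_one_eq_two]
end

section
/- Let γ₂′ = ∑_{x=2}^∞ [ ln(x·(x−1))·ln(x/(x−1)) − (2·ln x / x − 1/x²) ]. Then the sequence n ↦ (ln n)² − 2·(∑_{x=2}^n ln x / x) + (∑_{x=2}^n 1/x²) converges to γ₂′ as n → ∞. -/
/-!
`backwardError x` is the exact minus the approximate backward difference of `(log x)²` at `x`.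
Since `log (x (x-1)) log (x/(x-1)) = (log x)² - (log (x-1))²`, its sums over `2 ≤ x ≤ n`
telescope to the `n`-th term of the sequence. Writing `d = log (x/(x-1))`, the error equals
`2 log x (d - 1/x) - (d - 1/x)(d + 1/x)`, and `0 ≤ d - 1/x ≤ 1/(x(x-1))` makes it
`O(log x / x²) = O(x^(-3/2))`, so the series converges and the sequence tends to its sum.
-/

open Real Filter

noncomputable def backwardError (x : ℝ) : ℝ :=
  log (x * (x - 1)) * log (x / (x - 1)) - (2 * log x / x - 1 / x ^ 2)

lemma backwardError_eq_log_sq_sub {x : ℝ} (hx : x ≠ 0) (hx₁ : x - 1 ≠ 0) :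
    backwardError x = (log x ^ 2 - log (x - 1) ^ 2) - 2 * log x / x + 1 / x ^ 2 := by
  rw [backwardError, log_mul hx hx₁, log_div hx hx₁]
  ring

lemma backwardError_eq_mul {x : ℝ} (hx : x ≠ 0) (hx₁ : x - 1 ≠ 0) :
    backwardError x = 2 * log x * (log (x / (x - 1)) - 1 / x) -
      (log (x / (x - 1)) - 1 / x) * (log (x / (x - 1)) + 1 / x) := by
  rw [backwardError, log_mul hx hx₁, log_div hx hx₁]
  ring

lemma inv_le_log_div_sub_one {x : ℝ} (hx : 1 < x) : 1 / x ≤ log (x / (x - 1)) := by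
  have h := one_sub_inv_le_log_of_pos (x := x / (x - 1)) (by apply div_pos <;> linarith)
  rwa [inv_div, one_sub_div (by positivity), sub_sub_cancel] at h

lemma log_div_sub_one_le {x : ℝ} (hx : 1 < x) : log (x / (x - 1)) ≤ 1 / (x - 1) := by
  have h := log_le_sub_one_of_pos (x := x / (x - 1)) (by apply div_pos <;> linarith)
  rwa [div_sub_one (by linarith), sub_sub_cancel] at h

lemma abs_backwardError_le {x : ℝ} (hx : 2 ≤ x) :
    |backwardError x| ≤ 4 * (log x + 1) / x ^ 2 := by
  set d := log (x / (x - 1))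
  have hd₁ := inv_le_log_div_sub_one (by linarith : 1 < x)
  have hd₂ := log_div_sub_one_le (by linarith : 1 < x)
  have hL : 0 ≤ log x := log_nonneg (by linarith)
  have hx₀ : 0 < x - 1 := by linarith
  have hgap : d - 1 / x ≤ 1 / (x * (x - 1)) := by
    have : 1 / (x - 1) - 1 / x = 1 / (x * (x - 1)) := by field_simp; ring
    linarith
  have hsum : d + 1 / x ≤ 2 := by
    have : 1 / x ≤ 1 := by rw [div_le_one] <;> linarith
    have : 1 / (x - 1) ≤ 1 := by rw [div_le_one] <;> linarith
    linarith
  have hgap₀ : 0 ≤ d - 1 / x := by linarith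
  have hsum₀ : 0 ≤ d + 1 / x := by linarith [one_div_pos.mpr (by linarith : (0 : ℝ) < x)]
  have hsq : 1 / (x * (x - 1)) ≤ 2 / x ^ 2 := by
    rw [div_le_div_iff₀ (by positivity) (by positivity)]
    nlinarith
  have h₁ : 2 * log x * (d - 1 / x) ≤ 2 * log x * (2 / x ^ 2) := by
    gcongr
    exact hgap.trans hsq
  have h₂ : (d - 1 / x) * (d + 1 / x) ≤ 2 / x ^ 2 * 2 :=
    mul_le_mul (hgap.trans hsq) hsum hsum₀ (by positivity)
  have h₃ : 0 ≤ 2 * log x * (d - 1 / x) := by positivity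
  have h₄ : 0 ≤ (d - 1 / x) * (d + 1 / x) := mul_nonneg hgap₀ hsum₀
  have : 4 * (log x + 1) / x ^ 2 = 2 * log x * (2 / x ^ 2) + 2 / x ^ 2 * 2 := by ring
  rw [backwardError_eq_mul (by positivity) hx₀.ne', abs_le]
  constructor <;> linarith

lemma log_add_one_div_sq_le {x : ℝ} (hx : 1 ≤ x) :
    (log x + 1) / x ^ 2 ≤ 3 / x ^ (3 / 2 : ℝ) := by
  have hlog : log x ≤ 2 * x ^ (1 / 2 : ℝ) := by
    have := log_le_rpow_div (by linarith : 0 ≤ x) (by norm_num : (0 : ℝ) < 1 / 2)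
    linarith
  have hone : 1 ≤ x ^ (1 / 2 : ℝ) := one_le_rpow hx (by norm_num)
  have hsplit : x ^ 2 = x ^ (1 / 2 : ℝ) * x ^ (3 / 2 : ℝ) := by
    rw [← rpow_add (by linarith), ← rpow_natCast]
    norm_num
  rw [div_le_div_iff₀ (by positivity) (by positivity), hsplit]
  have : 0 < x ^ (3 / 2 : ℝ) := by positivity
  nlinarith

lemma summable_backwardError_add_two :
    Summable fun k : ℕ => backwardError ((k : ℝ) + 2) := by
  have hp : Summable fun k : ℕ => 3 * (1 / ((k + 2 : ℕ) : ℝ) ^ (3 / 2 : ℝ)) :=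
    ((summable_nat_add_iff 2).mpr (summable_one_div_nat_rpow.mpr (by norm_num))).mul_left 3
  refine Summable.of_norm_bounded (hp.mul_left 4) fun k => ?_
  have hk : (2 : ℝ) ≤ k + 2 := by linarith [k.cast_nonneg (α := ℝ)]
  calc ‖backwardError ((k : ℝ) + 2)‖ ≤ 4 * ((log ((k : ℝ) + 2) + 1) / ((k : ℝ) + 2) ^ 2) := by
        rw [Real.norm_eq_abs, ← mul_div_assoc]
        exact abs_backwardError_le hk
    _ ≤ 4 * (3 * (1 / ((k + 2 : ℕ) : ℝ) ^ (3 / 2 : ℝ))) := by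
        rw [mul_one_div]
        push_cast
        exact mul_le_mul_of_nonneg_left (log_add_one_div_sq_le (by linarith)) (by norm_num)

lemma sum_Icc_sub_sub_one (f : ℝ → ℝ) {m n : ℕ} (hmn : m ≤ n) :
    ∑ x ∈ Finset.Icc (m + 1) n, (f x - f (x - 1)) = f n - f m := by
  induction n, hmn using Nat.le_induction with
  | base => simp
  | succ n hmn ih =>
    rw [Finset.sum_Icc_succ_top (by omega), ih]
    push_cast
    ring_nf

lemma sum_Icc_two_backwardError (n : ℕ) :
    ∑ x ∈ Finset.Icc 2 n, backwardError x =
      log n ^ 2 - 2 * (∑ x ∈ Finset.Icc 2 n, log (x : ℝ) / x) +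
        ∑ x ∈ Finset.Icc 2 n, 1 / (x : ℝ) ^ 2 := by
  rcases Nat.eq_zero_or_pos n with rfl | hn
  · simp
  have hterm : ∀ x ∈ Finset.Icc 2 n, backwardError x =
      (log x ^ 2 - log ((x : ℝ) - 1) ^ 2) - 2 * (log x / x) + 1 / (x : ℝ) ^ 2 := by
    intro x hx
    have hx2 : (2 : ℝ) ≤ x := by exact_mod_cast (Finset.mem_Icc.mp hx).1
    rw [backwardError_eq_log_sq_sub (by linarith) (by linarith)]
    ring
  rw [Finset.sum_congr rfl hterm, Finset.sum_add_distrib, Finset.sum_sub_distrib,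
    sum_Icc_sub_sub_one (fun x => log x ^ 2) hn, Finset.mul_sum]
  simp

/-- With γ₂′ the sum of the backward errors for F(x) = (ln x)², the sequence
(ln n)² − 2 ∑_{x=2}^n ln x / x + ∑_{x=2}^n 1/x² tends to γ₂′. -/
theorem tendsto_partial_sums_to_gamma_two_prime (γ₂' : ℝ)
    (hγ₂' : γ₂' = ∑' x : ℕ,
      (Real.log (((x : ℝ) + 2) * ((x : ℝ) + 1)) *
          Real.log (((x : ℝ) + 2) / ((x : ℝ) + 1)) -
        (2 * Real.log ((x : ℝ) + 2) / ((x : ℝ) + 2) - 1 / ((x : ℝ) + 2) ^ 2))) :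
    Tendsto (fun n : ℕ =>
        (Real.log (n : ℝ)) ^ 2 - 2 * (∑ x ∈ Finset.Icc 2 n, Real.log (x : ℝ) / (x : ℝ)) +
          (∑ x ∈ Finset.Icc 2 n, 1 / (x : ℝ) ^ 2))
      atTop (nhds γ₂') := by
  have hγ : γ₂' = ∑' k : ℕ, backwardError ((k : ℝ) + 2) := by
    rw [hγ₂']
    congr 1 with k
    rw [backwardError, show (k : ℝ) + 2 - 1 = k + 1 by ring]
  have hpartial := (hγ ▸ summable_backwardError_add_two.hasSum).tendsto_sum_nat
  refine (hpartial.comp (tendsto_sub_atTop_nat 1)).congr fun n => ?_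
  rw [← sum_Icc_two_backwardError, ← Finset.Ico_add_one_right_eq_Icc,
    Finset.sum_Ico_eq_sum_range, show n + 1 - 2 = n - 1 by omega]
  simp [add_comm]
end

section
/- With γ₂ = ∑_{x=1}^∞ [ (1/x² + 2·ln x / x) − ln(x·(x+1))·ln((x+1)/x) ] and γ₂′ = ∑_{x=2}^∞ [ ln(x·(x−1))·ln(x/(x−1)) − (2·ln x / x − 1/x²) ], one has γ₂ + γ₂′ = π²/3 − 1. -/
/-!
Since `log (x (x + 1)) · log ((x + 1) / x) = log² (x + 1) - log² x`, the `x`-th summand of `γ₂` is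
`1 / x²` plus the amount by which the derivative `2 log t / t` of `log²` at the left end of
`[x, x + 1]` exceeds the increment of `log²` over that interval, and the summand of `γ₂′` is
`1 / x²` plus the amount by which that increment exceeds the derivative at the right end. The
derivative decreases on `[e, ∞)`, so both excesses are eventually nonnegative (mean value theorem),
and their sum telescopes to `2 log 1 / 1 - lim_{t → ∞} 2 log t / t = 0`. What is left is
`∑_{x ≥ 1} 1 / x² + ∑_{x ≥ 2} 1 / x² = π² / 3 - 1`.
-/

open Real Filter Finset Topology

lemma hasSum_sub_succ {α : Type*} [AddCommGroup α] [TopologicalSpace α] [IsTopologicalAddGroup α]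
    [T2Space α] {f : ℕ → α} {l : α} (hs : Summable fun n => f n - f (n + 1))
    (hf : Tendsto f atTop (𝓝 l)) : HasSum (fun n => f n - f (n + 1)) (f 0 - l) := by
  rw [hs.hasSum_iff_tendsto_nat]
  simpa only [sum_range_sub'] using tendsto_const_nhds.sub hf

lemma summable_sub_succ_of_antitone {f : ℕ → ℝ} {l : ℝ} (hf : Antitone f)
    (hl : Tendsto f atTop (𝓝 l)) : Summable fun n => f n - f (n + 1) :=
  summable_of_sum_range_le (c := f 0 - l) (fun n => sub_nonneg.2 (hf n.le_succ))
    fun n => by simpa only [sum_range_sub'] using sub_le_sub_left (hf.le_of_tendsto hl n) _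

lemma summable_of_summable_add_of_eventually_nonneg {u v : ℕ → ℝ} (h : Summable (u + v))
    (hu : ∀ᶠ n in atTop, 0 ≤ u n) (hv : ∀ᶠ n in atTop, 0 ≤ v n) : Summable u :=
  h.of_norm_bounded_eventually_nat <| by
    filter_upwards [hu, hv] with n hun hvn
    rw [norm_of_nonneg hun, Pi.add_apply]
    linarith

lemma hasSum_sub_add_one_of_antitoneOn {g : ℝ → ℝ} {a l : ℝ} (hg : AntitoneOn g (Set.Ici a))
    (hl : Tendsto g atTop (𝓝 l)) :
    HasSum (fun n : ℕ => g (n + 1) - g (n + 2)) (g 1 - l) := by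
  obtain ⟨N, hN⟩ := exists_nat_ge a
  have hcast (n : ℕ) : ((n + 1 : ℕ) : ℝ) + 1 = n + 2 := by push_cast; ring
  have hf_lim : Tendsto (fun n : ℕ => g (n + 1)) atTop (𝓝 l) :=
    hl.comp (tendsto_atTop_add_const_right _ 1 tendsto_natCast_atTop_atTop)
  have hmem (n : ℕ) : ((n + N : ℕ) : ℝ) + 1 ∈ Set.Ici a := by
    rw [Set.mem_Ici]
    push_cast
    linarith [n.cast_nonneg (α := ℝ)]
  have hf_anti : Antitone fun n : ℕ => g ((n + N : ℕ) + 1) :=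
    fun m n hmn => hg (hmem m) (hmem n) (by gcongr)
  have hs : Summable fun n : ℕ => g (n + 1) - g ((n + 1 : ℕ) + 1) :=
    (summable_nat_add_iff N).1 <|
      (summable_sub_succ_of_antitone hf_anti (hf_lim.comp (tendsto_add_atTop_nat N))).congr
        fun n => by rw [Nat.add_right_comm n 1 N]
  simpa only [hcast, Nat.cast_zero, zero_add] using hasSum_sub_succ hs hf_lim

section AntitoneDerivative

variable {F g : ℝ → ℝ} {a l : ℝ}

lemma mul_sub_le_sub_le_mul_sub_of_antitoneOn_deriv (hF : ∀ x ∈ Set.Ici a, HasDerivAt F (g x) x)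
    (hg : AntitoneOn g (Set.Ici a)) {s t : ℝ} (has : a ≤ s) (hst : s ≤ t) :
    g t * (t - s) ≤ F t - F s ∧ F t - F s ≤ g s * (t - s) := by
  have hsub : Set.Icc s t ⊆ Set.Ici a := fun x hx => has.trans hx.1
  have hcont : ContinuousOn F (Set.Icc s t) :=
    fun x hx => (hF x (hsub hx)).continuousAt.continuousWithinAt
  have hdiff : DifferentiableOn ℝ F (interior (Set.Icc s t)) := fun x hx =>
    (hF x (hsub (interior_subset hx))).differentiableAt.differentiableWithinAt
  have hderiv {x} (hx : x ∈ interior (Set.Icc s t)) : deriv F x = g x :=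
    (hF x (hsub (interior_subset hx))).deriv
  rw [interior_Icc] at hderiv
  have hs_mem : s ∈ Set.Icc s t := Set.left_mem_Icc.2 hst
  have ht_mem : t ∈ Set.Icc s t := Set.right_mem_Icc.2 hst
  refine ⟨(convex_Icc s t).mul_sub_le_image_sub_of_le_deriv hcont hdiff (fun x hx => ?_) s hs_mem
    t ht_mem hst, (convex_Icc s t).image_sub_le_mul_sub_of_deriv_le hcont hdiff (fun x hx => ?_)
    s hs_mem t ht_mem hst⟩ <;> rw [interior_Icc] at hx <;> rw [hderiv hx]
  · exact hg (hsub (Set.Ioo_subset_Icc_self hx)) (hsub ht_mem) hx.2.le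
  · exact hg (hsub hs_mem) (hsub (Set.Ioo_subset_Icc_self hx)) hx.1.le

lemma eventually_deriv_le_increment_le_deriv (hF : ∀ x ∈ Set.Ici a, HasDerivAt F (g x) x)
    (hg : AntitoneOn g (Set.Ici a)) :
    ∀ᶠ n : ℕ in atTop, g (n + 2) ≤ F (n + 2) - F (n + 1) ∧ F (n + 2) - F (n + 1) ≤ g (n + 1) := by
  filter_upwards [tendsto_natCast_atTop_atTop.eventually_ge_atTop a] with n hn
  have h := mul_sub_le_sub_le_mul_sub_of_antitoneOn_deriv hF hg (s := n + 1) (t := n + 2)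
    (by linarith) (by linarith)
  rwa [show (n : ℝ) + 2 - (n + 1) = 1 by ring, mul_one, mul_one] at h

lemma summable_deriv_sub_increment (hF : ∀ x ∈ Set.Ici a, HasDerivAt F (g x) x)
    (hg : AntitoneOn g (Set.Ici a)) (hl : Tendsto g atTop (𝓝 l)) :
    Summable fun n : ℕ => g (n + 1) - (F (n + 2) - F (n + 1)) :=
  summable_of_summable_add_of_eventually_nonneg
    (v := fun n : ℕ => F (n + 2) - F (n + 1) - g (n + 2))
    ((hasSum_sub_add_one_of_antitoneOn hg hl).summable.congr fun n => by
      rw [Pi.add_apply]; ring)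
    ((eventually_deriv_le_increment_le_deriv hF hg).mono fun n h => sub_nonneg.2 h.2)
    ((eventually_deriv_le_increment_le_deriv hF hg).mono fun n h => sub_nonneg.2 h.1)

lemma summable_increment_sub_deriv (hF : ∀ x ∈ Set.Ici a, HasDerivAt F (g x) x)
    (hg : AntitoneOn g (Set.Ici a)) (hl : Tendsto g atTop (𝓝 l)) :
    Summable fun n : ℕ => F (n + 2) - F (n + 1) - g (n + 2) :=
  ((hasSum_sub_add_one_of_antitoneOn hg hl).summable.sub
    (summable_deriv_sub_increment hF hg hl)).congr fun n => by ring

lemma tsum_deriv_sub_increment_add_tsum_increment_sub_deriv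
    (hF : ∀ x ∈ Set.Ici a, HasDerivAt F (g x) x)
    (hg : AntitoneOn g (Set.Ici a)) (hl : Tendsto g atTop (𝓝 l)) :
    ∑' n : ℕ, (g (n + 1) - (F (n + 2) - F (n + 1))) +
      ∑' n : ℕ, (F (n + 2) - F (n + 1) - g (n + 2)) = g 1 - l :=
  ((summable_deriv_sub_increment hF hg hl).hasSum.add
    (summable_increment_sub_deriv hF hg hl).hasSum).unique <|
      (hasSum_sub_add_one_of_antitoneOn hg hl).congr_fun fun n => by ring

end AntitoneDerivative

lemma hasDerivAt_log_sq {t : ℝ} (ht : t ≠ 0) :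
    HasDerivAt (fun s => log s ^ 2) (2 * log t / t) t :=
  ((hasDerivAt_log ht).fun_pow 2).congr_deriv (by norm_num; ring)

lemma antitoneOn_two_mul_log_div_self :
    AntitoneOn (fun t : ℝ => 2 * log t / t) (Set.Ici (exp 1)) := fun s hs t ht hst => by
  simp only [mul_div_assoc]
  exact mul_le_mul_of_nonneg_left (log_div_self_antitoneOn hs ht hst) zero_le_two

lemma tendsto_two_mul_log_div_self_atTop :
    Tendsto (fun t : ℝ => 2 * log t / t) atTop (𝓝 0) := by
  simpa only [mul_div_assoc, mul_zero, id] using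
    (isLittleO_log_id_atTop.tendsto_div_nhds_zero).const_mul 2

lemma log_mul_mul_log_div_s9 {s t : ℝ} (hs : s ≠ 0) (ht : t ≠ 0) :
    log (s * t) * log (t / s) = log t ^ 2 - log s ^ 2 := by
  rw [log_mul hs ht, log_div ht hs]
  ring

-- The `i = 0` term of the correction is `1 / 0 = 0`.
lemma hasSum_one_div_nat_add_sq (k : ℕ) :
    HasSum (fun n : ℕ => 1 / ((n : ℝ) + k) ^ 2) (π ^ 2 / 6 - ∑ i ∈ range k, 1 / (i : ℝ) ^ 2) := by
  have h := (hasSum_nat_add_iff' k).2 hasSum_zeta_two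
  push_cast at h
  exact h

/-- γ₂ + γ₂′ = π²/3 − 1. -/
theorem gamma_two_add_gamma_two_prime_eq_pi_sq (γ₂ γ₂' : ℝ)
    (hγ₂ : γ₂ = ∑' x : ℕ,
      ((1 / ((x : ℝ) + 1) ^ 2 + 2 * Real.log ((x : ℝ) + 1) / ((x : ℝ) + 1)) -
        Real.log (((x : ℝ) + 1) * ((x : ℝ) + 2)) *
          Real.log (((x : ℝ) + 2) / ((x : ℝ) + 1))))
    (hγ₂' : γ₂' = ∑' x : ℕ,
      (Real.log (((x : ℝ) + 2) * ((x : ℝ) + 1)) *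
          Real.log (((x : ℝ) + 2) / ((x : ℝ) + 1)) -
        (2 * Real.log ((x : ℝ) + 2) / ((x : ℝ) + 2) - 1 / ((x : ℝ) + 2) ^ 2))) :
    γ₂ + γ₂' = Real.pi ^ 2 / 3 - 1 := by
  have hF : ∀ x ∈ Set.Ici (exp 1), HasDerivAt (fun t => log t ^ 2) (2 * log x / x) x :=
    fun x hx => hasDerivAt_log_sq ((exp_pos 1).trans_le hx).ne'
  have hu := summable_deriv_sub_increment hF antitoneOn_two_mul_log_div_self
    tendsto_two_mul_log_div_self_atTop
  have hv := summable_increment_sub_deriv hF antitoneOn_two_mul_log_div_self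
    tendsto_two_mul_log_div_self_atTop
  have huv := tsum_deriv_sub_increment_add_tsum_increment_sub_deriv hF
    antitoneOn_two_mul_log_div_self tendsto_two_mul_log_div_self_atTop
  have hBasel₁ : HasSum (fun n : ℕ => 1 / ((n : ℝ) + 1) ^ 2) (π ^ 2 / 6) := by
    simpa using hasSum_one_div_nat_add_sq 1
  have hBasel₂ : HasSum (fun n : ℕ => 1 / ((n : ℝ) + 2) ^ 2) (π ^ 2 / 6 - 1) := by
    simpa [sum_range_succ] using hasSum_one_div_nat_add_sq 2
  rw [((hBasel₁.add hu.hasSum).congr_fun fun n => ?_).tsum_eq] at hγ₂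
  · rw [((hBasel₂.add hv.hasSum).congr_fun fun n => ?_).tsum_eq] at hγ₂'
    · simp only [log_one, mul_zero, div_one, sub_zero] at huv
      linarith
    · rw [mul_comm ((n : ℝ) + 2), log_mul_mul_log_div_s9 (by positivity) (by positivity)]
      ring
  · rw [log_mul_mul_log_div_s9 (by positivity) (by positivity)]
    ring
end
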